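/- arXiv:1709.08589 — 2 statements merged into one kernel-verified Lean document; each statement's English description precedes it below -/
import Mathlib

section
/- Let w be an involution in a Weyl group W with simple reflections S. Then either (i) there exists s ∈ S with ℓ(sw) < ℓ(w) and sw ≠ ws, or (ii) there is a subset J ⊆ S such that w is the longest element of the standard parabolic subgroup W_J and w lies in the center of W_J. -/
/-!
Humphreys' sign representation: letting `s i` act on `W × ℤˣ` by
`(t, ε) ↦ (s i * t * s i, ±ε)`, with the sign flipped exactly when `t = s i`, defines a
homomorphism whose sign component `reflSign w t` is `-1` exactly when `t` is a right inversion
of `w`. This is the strong exchange condition: `ℓ w` is the number of inversions of `w`, and the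
inversions of an element of `W_J` are reflections `T_J` of `W_J`.

If every descent in `J` of the involution `w` (left and right descents agree) commutes with `w`,
then `w` centralises `W_J` and its inversion set is stable under conjugation by `W_J`; containing
`J`, it contains `T_J`, so `ℓ u ≤ ℓ w` for `u ∈ W_J`. A longest `u₀ ∈ W_J` has inversion set
exactly `T_J`, which is stable under conjugation by `v = u₀⁻¹ * w`, so the inversions of `v` are
those of `w` outside `T_J`. When `J` is the whole descent set of `w`, `v` therefore has no simple
descent, and `w = u₀ ∈ W_J`.
-/

open List

theorem mul_mul_inv_eq_iff_eq_inv_mul_mul {G : Type*} [Group G] (u a b : G) :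
    u * a * u⁻¹ = b ↔ a = u⁻¹ * b * u := by
  constructor <;> rintro rfl <;> group

theorem Subgroup.apply_conj_eq_of_mem_closure {G α : Type*} [Group G] {f : G → α} {S : Set G}
    (hS : ∀ g ∈ S, ∀ x, f (g * x * g⁻¹) = f x) {z : G} (hz : z ∈ Subgroup.closure S)
    (x : G) : f (z * x * z⁻¹) = f x := by
  induction hz using Subgroup.closure_induction generalizing x with
  | mem g hg => exact hS g hg x
  | one => simp
  | mul a b _ _ ha hb =>
    rw [show a * b * x * (a * b)⁻¹ = a * (b * x * b⁻¹) * a⁻¹ by group, ha, hb]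
  | inv a _ ha => rw [← ha (a⁻¹ * x * a⁻¹⁻¹)]; group

namespace CoxeterSystem

noncomputable section

open scoped Classical

variable {B W : Type*} [Group W] {M : CoxeterMatrix B} (cs : CoxeterSystem M W)

local prefix:100 "s" => cs.simple
local prefix:100 "π" => cs.wordProd
local prefix:100 "ℓ" => cs.length
local prefix:100 "ris " => cs.rightInvSeq

def reflSignPerm (i : B) : Equiv.Perm (W × ℤˣ) :=
  Function.Involutive.toPerm (fun p => (s i * p.1 * s i, (if p.1 = s i then -1 else 1) * p.2)) <| by
    rintro ⟨t, ε⟩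
    by_cases h : t = s i <;>
      simp [h, mul_assoc, cs.simple_mul_simple_cancel_left, cs.simple_mul_simple_self,
        mul_eq_one_iff_eq_inv, cs.inv_simple]

theorem reflSignPerm_apply (i : B) (t : W) (ε : ℤˣ) :
    cs.reflSignPerm i (t, ε) = (s i * t * s i, (if t = s i then -1 else 1) * ε) := rfl

theorem pow_reflSignPerm_mul_apply (i j : B) (k : ℕ) (t : W) (ε : ℤˣ) :
    ((cs.reflSignPerm i * cs.reflSignPerm j) ^ k) (t, ε) =
      ((s i * s j) ^ k * t * ((s i * s j) ^ k)⁻¹,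
        (∏ n ∈ Finset.range (2 * k), if t = (s j * s i) ^ n * s j then -1 else 1) * ε) := by
  induction k generalizing t ε with
  | zero => simp
  | succ k ih =>
    have hmem : ∀ n : ℕ, s i * (s j * t * s j) * s i = (s j * s i) ^ n * s j ↔
        t = (s j * s i) ^ (n + 2) * s j := by
      intro n
      have hinv : (s i * s j)⁻¹ = s j * s i := by simp [cs.inv_simple]
      rw [show s i * (s j * t * s j) * s i = (s i * s j) * t * (s i * s j)⁻¹ by rw [hinv]; group,
        mul_mul_inv_eq_iff_eq_inv_mul_mul, hinv, pow_succ, pow_succ']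
      group
    have hmem1 : s j * t * s j = s i ↔ t = (s j * s i) ^ 1 * s j := by
      simpa only [cs.inv_simple, pow_one, ← mul_assoc] using
        mul_mul_inv_eq_iff_eq_inv_mul_mul (s j) t (s i)
    rw [pow_succ, Equiv.Perm.mul_apply, Equiv.Perm.mul_apply, reflSignPerm_apply,
      reflSignPerm_apply, ih, Prod.mk.injEq, show 2 * (k + 1) = 2 * k + 1 + 1 by ring,
      Finset.prod_range_succ', Finset.prod_range_succ']
    simp only [hmem, hmem1, pow_zero, one_mul]
    constructor
    · simp only [pow_succ, mul_inv_rev, cs.inv_simple, mul_assoc]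
    · group

theorem isLiftable_reflSignPerm : M.IsLiftable cs.reflSignPerm := by
  intro i j
  ext1 ⟨t, ε⟩
  -- the `n`-th and `(n + M i j)`-th factors of the sign agree, so it is a square
  have hsign : (∏ n ∈ Finset.range (2 * M i j),
      if t = (s j * s i) ^ n * s j then (-1 : ℤˣ) else 1) = 1 := by
    simp only [two_mul, Finset.prod_range_add, pow_add, cs.simple_mul_simple_pow', one_mul,
      Int.units_mul_self]
  rw [pow_reflSignPerm_mul_apply, cs.simple_mul_simple_pow, hsign]
  simp

def reflRep : W →* Equiv.Perm (W × ℤˣ) :=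
  cs.lift ⟨cs.reflSignPerm, cs.isLiftable_reflSignPerm⟩

def reflSign (w t : W) : ℤˣ := (cs.reflRep w (t, 1)).2

theorem reflRep_simple (i : B) : cs.reflRep (s i) = cs.reflSignPerm i :=
  cs.lift_apply_simple cs.isLiftable_reflSignPerm i

theorem reflRep_wordProd (ω : List B) (t : W) (ε : ℤˣ) :
    cs.reflRep (π ω) (t, ε) = (π ω * t * (π ω)⁻¹, (-1) ^ (ris ω).count t * ε) := by
  induction ω generalizing t ε with
  | nil => simp
  | cons i ω ih =>
    rw [wordProd_cons, map_mul, Equiv.Perm.mul_apply, ih, reflRep_simple, reflSignPerm_apply,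
      rightInvSeq, count_cons, mul_mul_inv_eq_iff_eq_inv_mul_mul, Prod.mk.injEq]
    constructor
    · simp only [mul_inv_rev, cs.inv_simple, mul_assoc]
    · by_cases h : t = (π ω)⁻¹ * s i * π ω
      · simp [h, pow_succ]
      · simp [h, Ne.symm h]

theorem reflRep_apply (w t : W) (ε : ℤˣ) :
    cs.reflRep w (t, ε) = (w * t * w⁻¹, cs.reflSign w t * ε) := by
  obtain ⟨ω, rfl⟩ := cs.wordProd_surjective w
  simp [reflSign, reflRep_wordProd]

theorem reflSign_wordProd (ω : List B) (t : W) :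
    cs.reflSign (π ω) t = (-1) ^ (ris ω).count t := by
  simp [reflSign, reflRep_wordProd]

theorem reflSign_mul (a b t : W) :
    cs.reflSign (a * b) t = cs.reflSign a (b * t * b⁻¹) * cs.reflSign b t := by
  have h := congrArg Prod.snd (Equiv.Perm.mul_apply (cs.reflRep a) (cs.reflRep b) (t, 1))
  rwa [← map_mul, reflRep_apply, reflRep_apply, reflRep_apply, mul_one, mul_one] at h

theorem reflSign_simple (i : B) (t : W) : cs.reflSign (s i) t = if t = s i then -1 else 1 := by
  simp [reflSign, reflRep_simple, reflSignPerm_apply]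

theorem reflSign_one (t : W) : cs.reflSign 1 t = 1 := by
  simp [reflSign]

theorem mem_rightInvSeq_of_reflSign_eq_neg_one {ω : List B} {t : W}
    (h : cs.reflSign (π ω) t = -1) : t ∈ ris ω := by
  by_contra ht
  rw [reflSign_wordProd, count_eq_zero_of_not_mem ht, pow_zero] at h
  exact absurd h (by decide)

theorem isRightInversion_of_reflSign_eq_neg_one {w t : W} (h : cs.reflSign w t = -1) :
    cs.IsRightInversion w t := by
  obtain ⟨ω, hω, rfl⟩ := cs.exists_isReduced w
  exact cs.isRightInversion_of_mem_rightInvSeq hω (cs.mem_rightInvSeq_of_reflSign_eq_neg_one h)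

theorem reflSign_self {t : W} (ht : cs.IsReflection t) : cs.reflSign t t = -1 := by
  obtain ⟨z, i, rfl⟩ := ht
  have hconj := cs.reflSign_mul (z * s i) z⁻¹ (z * s i * z⁻¹)
  have hz := cs.reflSign_mul z (s i) (s i)
  have hinv := cs.reflSign_mul z⁻¹ z (s i)
  rw [show z⁻¹ * (z * s i * z⁻¹) * z⁻¹⁻¹ = s i by group] at hconj
  simp only [inv_mul_cancel, reflSign_one, reflSign_simple, cs.inv_simple,
    cs.simple_mul_simple_cancel_right, if_pos, mul_neg, mul_one] at hz hinv
  rw [hconj, hz, neg_mul, mul_comm, ← hinv]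

theorem reflSign_eq_neg_one_of_isRightInversion {w t : W} (h : cs.IsRightInversion w t) :
    cs.reflSign w t = -1 := by
  refine (Int.units_eq_one_or _).resolve_left fun h1 => ?_
  have hwt : cs.reflSign (w * t) t = -1 := by
    rw [reflSign_mul, mul_inv_cancel_right, reflSign_self cs h.1, h1, one_mul]
  have := (cs.isRightInversion_of_reflSign_eq_neg_one hwt).2
  rw [mul_assoc, h.1.mul_self, mul_one] at this
  exact absurd h.2 (by omega)

theorem reflSign_eq_neg_one_iff {w t : W} : cs.reflSign w t = -1 ↔ cs.IsRightInversion w t :=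
  ⟨cs.isRightInversion_of_reflSign_eq_neg_one, cs.reflSign_eq_neg_one_of_isRightInversion⟩

theorem reflSign_eq_one_iff {w t : W} : cs.reflSign w t = 1 ↔ ¬cs.IsRightInversion w t := by
  rw [← reflSign_eq_neg_one_iff]
  rcases Int.units_eq_one_or (cs.reflSign w t) with h | h <;> simp [h]

theorem mem_rightInvSeq_of_isRightInversion {ω : List B} {t : W}
    (h : cs.IsRightInversion (π ω) t) : t ∈ ris ω :=
  cs.mem_rightInvSeq_of_reflSign_eq_neg_one (cs.reflSign_eq_neg_one_iff.2 h)

theorem setOf_isRightInversion_wordProd {ω : List B} (hω : cs.IsReduced ω) :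
    {t | cs.IsRightInversion (π ω) t} = ↑(ris ω).toFinset := by
  ext t
  simpa using
    ⟨cs.mem_rightInvSeq_of_isRightInversion, cs.isRightInversion_of_mem_rightInvSeq hω⟩

theorem ncard_setOf_isRightInversion (w : W) : {t | cs.IsRightInversion w t}.ncard = ℓ w := by
  obtain ⟨ω, hω, rfl⟩ := cs.exists_isReduced w
  rw [setOf_isRightInversion_wordProd cs hω, Set.ncard_coe_finset,
    toFinset_card_of_nodup hω.nodup_rightInvSeq, length_rightInvSeq, hω.eq]

theorem length_le_of_isRightInversion_imp {u w : W}
    (h : ∀ t, cs.IsRightInversion u t → cs.IsRightInversion w t) : ℓ u ≤ ℓ w := by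
  obtain ⟨ω, hω, rfl⟩ := cs.exists_isReduced w
  rw [← ncard_setOf_isRightInversion, ← ncard_setOf_isRightInversion]
  exact Set.ncard_le_ncard h (setOf_isRightInversion_wordProd cs hω ▸ Finset.finite_toSet _)

theorem isRightInversion_inv_mul_iff {u w : W} {T : Set W}
    (hu : ∀ t, cs.IsRightInversion u t ↔ t ∈ T) (hw : ∀ t ∈ T, cs.IsRightInversion w t)
    (hT : ∀ t, u⁻¹ * w * t * (u⁻¹ * w)⁻¹ ∈ T ↔ t ∈ T) (t : W) :
    cs.IsRightInversion (u⁻¹ * w) t ↔ cs.IsRightInversion w t ∧ t ∉ T := by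
  have hsign : cs.reflSign w t =
      cs.reflSign u (u⁻¹ * w * t * (u⁻¹ * w)⁻¹) * cs.reflSign (u⁻¹ * w) t := by
    rw [← reflSign_mul, mul_inv_cancel_left]
  by_cases ht : t ∈ T
  · rw [cs.reflSign_eq_neg_one_iff.2 (hw t ht),
      cs.reflSign_eq_neg_one_iff.2 ((hu _).2 ((hT t).2 ht)), neg_one_mul, neg_inj, eq_comm,
      cs.reflSign_eq_one_iff] at hsign
    simp [hsign, ht]
  · rw [cs.reflSign_eq_one_iff.2 (mt (hu _).1 (mt (hT t).1 ht)), one_mul] at hsign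
    simp only [ht, not_false_eq_true, and_true, ← cs.reflSign_eq_neg_one_iff, hsign]

section Parabolic

variable (J : Set B)

def parabolicReflections : Set W :=
  {t | ∃ z ∈ Subgroup.closure (cs.simple '' J), ∃ j ∈ J, t = z * s j * z⁻¹}

variable {J}

theorem wordProd_mem_closure {ω : List B} (hω : ∀ i ∈ ω, i ∈ J) :
    π ω ∈ Subgroup.closure (cs.simple '' J) :=
  Subgroup.list_prod_mem _ (l := ω.map cs.simple) fun x hx => by
    obtain ⟨i, hi, rfl⟩ := List.mem_map.1 hx
    exact Subgroup.subset_closure ⟨i, hω i hi, rfl⟩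

theorem exists_wordProd_of_mem_closure {u : W} (hu : u ∈ Subgroup.closure (cs.simple '' J)) :
    ∃ ω : List B, (∀ i ∈ ω, i ∈ J) ∧ π ω = u := by
  induction hu using Subgroup.closure_induction with
  | mem x hx =>
    obtain ⟨i, hi, rfl⟩ := hx
    exact ⟨[i], by simpa using hi, by simp⟩
  | one => exact ⟨[], by simp, by simp⟩
  | mul x y _ _ hx hy =>
    obtain ⟨ω, hω, rfl⟩ := hx
    obtain ⟨ω', hω', rfl⟩ := hy
    exact ⟨ω ++ ω', fun i hi => (mem_append.1 hi).elim (hω i) (hω' i),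
      cs.wordProd_append ω ω'⟩
  | inv x _ hx =>
    obtain ⟨ω, hω, rfl⟩ := hx
    exact ⟨ω.reverse, by simpa using hω, cs.wordProd_reverse ω⟩

theorem isReflection_of_mem_parabolicReflections {t : W} (ht : t ∈ cs.parabolicReflections J) :
    cs.IsReflection t := by
  obtain ⟨z, -, j, -, rfl⟩ := ht
  exact ⟨z, j, rfl⟩

theorem mem_closure_of_mem_parabolicReflections {t : W} (ht : t ∈ cs.parabolicReflections J) :
    t ∈ Subgroup.closure (cs.simple '' J) := by
  obtain ⟨z, hz, j, hj, rfl⟩ := ht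
  exact mul_mem (mul_mem hz (Subgroup.subset_closure ⟨j, hj, rfl⟩)) (inv_mem hz)

theorem simple_mem_parabolicReflections {j : B} (hj : j ∈ J) :
    s j ∈ cs.parabolicReflections J :=
  ⟨1, one_mem _, j, hj, by simp⟩

theorem conj_mem_parabolicReflections {z t : W} (hz : z ∈ Subgroup.closure (cs.simple '' J))
    (ht : t ∈ cs.parabolicReflections J) : z * t * z⁻¹ ∈ cs.parabolicReflections J := by
  obtain ⟨y, hy, j, hj, rfl⟩ := ht
  exact ⟨z * y, mul_mem hz hy, j, hj, by group⟩

theorem conj_mem_parabolicReflections_iff {z : W} (hz : z ∈ Subgroup.closure (cs.simple '' J))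
    (t : W) : z * t * z⁻¹ ∈ cs.parabolicReflections J ↔ t ∈ cs.parabolicReflections J := by
  refine ⟨fun h => ?_, cs.conj_mem_parabolicReflections hz⟩
  simpa [mul_assoc] using cs.conj_mem_parabolicReflections (inv_mem hz) h

theorem mem_parabolicReflections_of_mem_rightInvSeq {ω : List B} (hω : ∀ i ∈ ω, i ∈ J)
    {t : W} (ht : t ∈ ris ω) : t ∈ cs.parabolicReflections J := by
  induction ω with
  | nil => simp at ht
  | cons i ω ih =>
    have hωJ : ∀ j ∈ ω, j ∈ J := fun j hj => hω j (mem_cons_of_mem i hj)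
    rcases mem_cons.1 ht with rfl | ht
    · exact ⟨(π ω)⁻¹, inv_mem (cs.wordProd_mem_closure hωJ), i, hω i mem_cons_self,
        by rw [inv_inv]⟩
    · exact ih hωJ ht

theorem mem_parabolicReflections_of_isRightInversion {u t : W}
    (hu : u ∈ Subgroup.closure (cs.simple '' J)) (ht : cs.IsRightInversion u t) :
    t ∈ cs.parabolicReflections J := by
  obtain ⟨ω, hω, rfl⟩ := cs.exists_wordProd_of_mem_closure hu
  exact cs.mem_parabolicReflections_of_mem_rightInvSeq hω
    (cs.mem_rightInvSeq_of_isRightInversion ht)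

theorem isRightInversion_iff_mem_parabolicReflections_of_forall_length_le {u : W}
    (hu : u ∈ Subgroup.closure (cs.simple '' J))
    (hmax : ∀ x ∈ Subgroup.closure (cs.simple '' J), ℓ x ≤ ℓ u) (t : W) :
    cs.IsRightInversion u t ↔ t ∈ cs.parabolicReflections J := by
  refine ⟨cs.mem_parabolicReflections_of_isRightInversion hu, fun ht => ?_⟩
  have hrefl := cs.isReflection_of_mem_parabolicReflections ht
  have hut := mul_mem hu (cs.mem_closure_of_mem_parabolicReflections ht)
  exact ⟨hrefl, lt_of_le_of_ne (hmax _ hut) (hrefl.length_mul_left_ne u)⟩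

theorem reflSign_simple_conj_of_commute {w : W} {i : B} (h : Commute (s i) w) (t : W) :
    cs.reflSign w (s i * t * s i) = cs.reflSign w t := by
  have hs : cs.reflSign (s i) (w * t * w⁻¹) = cs.reflSign (s i) t := by
    simp only [reflSign_simple, mul_mul_inv_eq_iff_eq_inv_mul_mul, h.symm.inv_mul_cancel]
  have := congrArg (cs.reflSign · t) h.eq
  simp only [reflSign_mul, cs.inv_simple, hs] at this
  exact mul_right_cancel (this.symm.trans (mul_comm _ _))

variable {w : W} (hcomm : ∀ j ∈ J, Commute (cs.simple j) w)
include hcomm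

theorem commute_of_mem_closure {u : W} (hu : u ∈ Subgroup.closure (cs.simple '' J)) :
    Commute u w := by
  have hle : Subgroup.closure (cs.simple '' J) ≤ Subgroup.centralizer {w} :=
    (Subgroup.closure_le _).2 fun _ ⟨j, hj, hx⟩ =>
      Subgroup.mem_centralizer_singleton_iff.2 (hx ▸ hcomm j hj)
  exact Subgroup.mem_centralizer_singleton_iff.1 (hle hu)

theorem reflSign_conj_of_mem_closure {z : W} (hz : z ∈ Subgroup.closure (cs.simple '' J))
    (t : W) : cs.reflSign w (z * t * z⁻¹) = cs.reflSign w t := by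
  refine Subgroup.apply_conj_eq_of_mem_closure (f := cs.reflSign w) ?_ hz t
  rintro _ ⟨j, hj, rfl⟩ x
  rw [cs.inv_simple]
  exact cs.reflSign_simple_conj_of_commute (hcomm j hj) x

theorem isRightInversion_of_mem_parabolicReflections (hdesc : ∀ j ∈ J, cs.IsRightDescent w j)
    {t : W} (ht : t ∈ cs.parabolicReflections J) : cs.IsRightInversion w t := by
  obtain ⟨z, hz, j, hj, rfl⟩ := ht
  rw [← reflSign_eq_neg_one_iff, cs.reflSign_conj_of_mem_closure hcomm hz,
    reflSign_eq_neg_one_iff, isRightInversion_simple_iff_isRightDescent]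
  exact hdesc j hj

theorem length_le_of_mem_closure (hdesc : ∀ j ∈ J, cs.IsRightDescent w j) {u : W}
    (hu : u ∈ Subgroup.closure (cs.simple '' J)) : ℓ u ≤ ℓ w :=
  cs.length_le_of_isRightInversion_imp fun _ ht =>
    cs.isRightInversion_of_mem_parabolicReflections hcomm hdesc
      (cs.mem_parabolicReflections_of_isRightInversion hu ht)

theorem conj_mem_parabolicReflections_iff_of_commute (t : W) :
    w * t * w⁻¹ ∈ cs.parabolicReflections J ↔ t ∈ cs.parabolicReflections J := by
  have hc {x : W} (hx : x ∈ cs.parabolicReflections J) : Commute w x :=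
    (cs.commute_of_mem_closure hcomm (cs.mem_closure_of_mem_parabolicReflections hx)).symm
  refine ⟨fun h => ?_, fun h => by rwa [(hc h).mul_inv_cancel]⟩
  rwa [show t = w⁻¹ * (w * t * w⁻¹) * w by group, (hc h).inv_mul_cancel]

theorem mem_closure_of_forall_mem_iff_isRightDescent [Finite W]
    (hJ : ∀ i, i ∈ J ↔ cs.IsRightDescent w i) : w ∈ Subgroup.closure (cs.simple '' J) := by
  obtain ⟨⟨u₀, hu₀⟩, hmax⟩ :=
    Finite.exists_max fun u : Subgroup.closure (cs.simple '' J) => ℓ u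
  have hconj (t : W) : u₀⁻¹ * w * t * (u₀⁻¹ * w)⁻¹ ∈ cs.parabolicReflections J ↔
      t ∈ cs.parabolicReflections J := by
    rw [show u₀⁻¹ * w * t * (u₀⁻¹ * w)⁻¹ = u₀⁻¹ * (w * t * w⁻¹) * u₀⁻¹⁻¹ by group,
      cs.conj_mem_parabolicReflections_iff (inv_mem hu₀),
      cs.conj_mem_parabolicReflections_iff_of_commute hcomm]
  suffices u₀⁻¹ * w = 1 from inv_mul_eq_one.1 this ▸ hu₀
  by_contra hne
  obtain ⟨i, hi⟩ := cs.exists_rightDescent_of_ne_one hne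
  obtain ⟨hwi, hiT⟩ := (cs.isRightInversion_inv_mul_iff
    (cs.isRightInversion_iff_mem_parabolicReflections_of_forall_length_le hu₀
      fun x hx => hmax ⟨x, hx⟩)
    (fun _ => cs.isRightInversion_of_mem_parabolicReflections hcomm fun j => (hJ j).1)
    hconj (s i)).1 ((cs.isRightInversion_simple_iff_isRightDescent _ i).2 hi)
  exact hiT (cs.simple_mem_parabolicReflections
    ((hJ i).2 ((cs.isRightInversion_simple_iff_isRightDescent w i).1 hwi)))

end Parabolic

end

end CoxeterSystem

/-- Let `w` be an involution in a (finite) Weyl group `W` with simple reflections `S`.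
Then either (i) there exists a simple reflection `s` with `ℓ(sw) < ℓ(w)` and `sw ≠ ws`,
or (ii) there is a subset `J ⊆ S` such that `w` is the longest element of the standard
parabolic subgroup `W_J` and `w` lies in the center of `W_J`. -/
theorem involution_descent_or_longest_central
    {B : Type*} {W : Type*} [Group W] [Finite W] {M : CoxeterMatrix B}
    (cs : CoxeterSystem M W) (w : W) (hw : w * w = 1) :
    (∃ i : B, cs.length (cs.simple i * w) < cs.length w ∧
        cs.simple i * w ≠ w * cs.simple i) ∨
    (∃ J : Set B,
      w ∈ Subgroup.closure (cs.simple '' J) ∧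
      (∀ u ∈ Subgroup.closure (cs.simple '' J), cs.length u ≤ cs.length w) ∧
      (∀ u ∈ Subgroup.closure (cs.simple '' J), u * w = w * u)) := by
  by_cases h : ∃ i : B, cs.length (cs.simple i * w) < cs.length w ∧
      cs.simple i * w ≠ w * cs.simple i
  · exact Or.inl h
  push Not at h
  have hcomm : ∀ i ∈ {i | cs.IsLeftDescent w i}, Commute (cs.simple i) w := h
  have hJ : ∀ i, i ∈ {i | cs.IsLeftDescent w i} ↔ cs.IsRightDescent w i := fun i => by
    rw [← cs.isLeftDescent_inv_iff, inv_eq_of_mul_eq_one_right hw]; rfl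
  exact Or.inr ⟨_, cs.mem_closure_of_forall_mem_iff_isRightDescent hcomm hJ,
    fun _ hu => cs.length_le_of_mem_closure hcomm (fun j => (hJ j).1) hu,
    fun u hu => (cs.commute_of_mem_closure hcomm hu).eq⟩
end

section
/- Let w be an involution in the Weyl group W of a root system R, and let R_w = {α ∈ R : w(α) = −α}. Then R_w spans the (−1)-eigenspace X_w of w acting on the ambient vector space X = ℝ ⊗ X(T). -/
open scoped RealInnerProductSpace

variable {V : Type*} [NormedAddCommGroup V] [InnerProductSpace ℝ V] [FiniteDimensional ℝ V]

/-- The reflection in the hyperplane orthogonal to `α`. -/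
noncomputable def wrefl (α : V) : V ≃ₗᵢ[ℝ] V := Submodule.reflection (ℝ ∙ α)ᗮ

/-- A (reduced) root system in a real inner product space. -/
structure IsRootSystem (R : Finset V) : Prop where
  ne_zero : (0 : V) ∉ R
  span_eq_top : Submodule.span ℝ (R : Set V) = ⊤
  reduced : ∀ α ∈ R, ∀ c : ℝ, c • α ∈ R → c = 1 ∨ c = -1
  refl_mem : ∀ α ∈ R, ∀ β ∈ R, wrefl α β ∈ R
  pairing_int : ∀ α ∈ R, ∀ β ∈ R, ∃ n : ℤ, 2 * ⟪α, β⟫ / ⟪α, α⟫ = (n : ℝ)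

/-- The Weyl group of a root system, as a group of linear isometries. -/
noncomputable def weylGroup (R : Finset V) : Subgroup (V ≃ₗᵢ[ℝ] V) :=
  Subgroup.closure (wrefl '' (R : Set V))

/-- A system of positive roots. -/
structure IsPositiveSystem (R Rpos : Finset V) : Prop where
  subset : Rpos ⊆ R
  mem_or_neg_mem : ∀ α ∈ R, α ∈ Rpos ∨ -α ∈ Rpos
  not_mem_and_neg_mem : ∀ α ∈ Rpos, -α ∉ Rpos
  add_mem : ∀ α ∈ Rpos, ∀ β ∈ Rpos, α + β ∈ R → α + β ∈ Rpos

/-- A simple (indecomposable) positive root. -/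
def IsSimpleRoot (Rpos : Finset V) (α : V) : Prop :=
  α ∈ Rpos ∧ ¬∃ β ∈ Rpos, ∃ γ ∈ Rpos, α = β + γ

/-- The length of `w`, i.e. the number of positive roots sent by `w` to negative roots. -/
noncomputable def len (Rpos : Finset V) (w : V ≃ₗᵢ[ℝ] V) : ℕ := by
  classical exact (Rpos.filter fun α => w α ∉ Rpos).card

/-- The coroot attached to a root. -/
noncomputable def cv (α : V) : V := (2 / ⟪α, α⟫) • α

/-- The dominance order: `α ≤ α'` iff `α' - α` is a nonnegative combination of
positive roots. -/
def rle (Rpos : Finset V) (α α' : V) : Prop :=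
  ∃ c : V → ℝ, (∀ β, 0 ≤ c β) ∧ α' - α = ∑ β ∈ Rpos, c β • β

/-- `α` is maximal in `S` for the dominance order. -/
def IsMaxIn (Rpos : Finset V) (S : Set V) (α : V) : Prop :=
  α ∈ S ∧ ∀ α' ∈ S, rle Rpos α α' → rle Rpos α' α

/-- The `n`-th layer of Kostant's cascade: the maximal positive roots among those
orthogonal to all roots of the previous layers. -/
def cascadeLevel (Rpos : Finset V) : ℕ → Set V
  | n =>
    {α | IsMaxIn Rpos
      {β | β ∈ Rpos ∧ ∀ m, m < n → ∀ γ ∈ cascadeLevel Rpos m, ⟪γ, β⟫ = 0} α}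
  termination_by n => n

/-- Kostant's cascade of orthogonal roots. -/
def cascade (Rpos : Finset V) : Set V := ⋃ n, cascadeLevel Rpos n

/-- The set of positive roots on which an involution `w` acts by `-1`. -/
noncomputable def posNegSet (Rpos : Finset V) (w : V ≃ₗᵢ[ℝ] V) : Finset V := by
  classical exact Rpos.filter fun α => w α = -α

/-- The element `r_w`: the sum of the coroots of the cascade of the root system
`R_w = {α ∈ R : w α = -α}`. -/
noncomputable def rInv (Rpos : Finset V) (w : V ≃ₗᵢ[ℝ] V) : V :=
  ∑ α ∈ posNegSet Rpos w, Set.indicator (cascade (posNegSet Rpos w)) cv α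

/-- The `(-1)`-eigenspace of a linear isometry `w` with `w ∘ w = 1`. -/
def negSpace (w : V ≃ₗᵢ[ℝ] V) : Submodule ℝ V where
  carrier := {x | w x = -x}
  add_mem' := by
    intro a b ha hb
    simp only [Set.mem_setOf_eq] at *
    rw [map_add, ha, hb]; abel
  zero_mem' := by simp
  smul_mem' := by
    intro c x hx
    simp only [Set.mem_setOf_eq] at *
    rw [map_smul, hx, smul_neg]

/-! Fix a vector `t` orthogonal to no root; it determines positive roots `Φ⁺` and simple roots,
and we induct on the number of positive roots that `w` makes negative. If `w ≠ 1`, the exchange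
condition gives a simple root `δ` with `w δ < 0`. If `w δ = -δ`, then `w s_δ` is a shorter
involution with `X_{w s_δ} = X_w ∩ δᗮ`, so `X_w = ℝ δ ⊕ X_{w s_δ}` is spanned by `δ` and the
roots of `X_{w s_δ}`. Otherwise `s_δ w s_δ` is an involution shorter by two, and `s_δ` carries
its `(-1)`-eigenspace and its roots onto those of `w`. -/

theorem AddSubmonoid.exists_nsmul_add_of_mem_closure {M : Type*} [AddCommMonoid M] {S : Set M}
    (a : M) {x : M} (hx : x ∈ AddSubmonoid.closure S) :
    ∃ n : ℕ, ∃ y ∈ AddSubmonoid.closure (S \ {a}), x = n • a + y := by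
  induction hx using AddSubmonoid.closure_induction with
  | mem s hs =>
    by_cases hsa : s = a
    · exact ⟨1, 0, zero_mem _, by simp [hsa]⟩
    · exact ⟨0, s, AddSubmonoid.subset_closure ⟨hs, hsa⟩, by simp⟩
  | zero => exact ⟨0, 0, zero_mem _, by simp⟩
  | add x y _ _ hx hy =>
    obtain ⟨m, u, hu, rfl⟩ := hx
    obtain ⟨n, v, hv, rfl⟩ := hy
    exact ⟨m + n, u + v, add_mem hu hv, by rw [add_nsmul]; abel⟩

section

variable {E : Type*} [NormedAddCommGroup E] [InnerProductSpace ℝ E] {R : Finset E} {t : E}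

theorem wrefl_apply (α x : E) : wrefl α x = x - (2 * ⟪x, α⟫ / ⟪α, α⟫) • α := by
  rw [wrefl, Submodule.reflection_orthogonal_apply, Submodule.reflection_singleton_apply,
    real_inner_self_eq_norm_sq, real_inner_comm]
  simp only [RCLike.ofReal_real_eq_id, id_eq]
  module

@[simp]
theorem wrefl_apply_self (α : E) : wrefl α α = -α :=
  Submodule.reflection_orthogonalComplement_singleton_eq_neg α

@[simp]
theorem wrefl_wrefl (α x : E) : wrefl α (wrefl α x) = x :=
  Submodule.reflection_reflection _ x

@[simp]
theorem wrefl_mul_self (α : E) : wrefl α * wrefl α = 1 :=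
  Submodule.reflection_mul_reflection _

@[simp]
theorem wrefl_mul_wrefl_mul (α : E) (g : E ≃ₗᵢ[ℝ] E) : wrefl α * (wrefl α * g) = g := by
  rw [← mul_assoc, wrefl_mul_self, one_mul]

@[simp]
theorem wrefl_inv (α : E) : (wrefl α)⁻¹ = wrefl α :=
  Submodule.reflection_inv

theorem wrefl_apply_of_inner_eq_zero {α x : E} (h : ⟪x, α⟫ = 0) : wrefl α x = x := by
  simp [wrefl_apply, h]

@[simp]
theorem wrefl_neg (α : E) : wrefl (-α) = wrefl α := by
  ext x
  simp [wrefl_apply, neg_div, sub_eq_add_neg]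

theorem mul_wrefl_mul_inv (g : E ≃ₗᵢ[ℝ] E) (α : E) : g * wrefl α * g⁻¹ = wrefl (g α) := by
  ext x
  have hx : ⟪g.symm x, α⟫ = ⟪x, g α⟫ := by rw [← g.inner_map_map, g.apply_symm_apply]
  simp [wrefl_apply, hx]

theorem wrefl_mem_weylGroup {α : E} (hα : α ∈ R) : wrefl α ∈ weylGroup R :=
  Subgroup.subset_closure ⟨α, hα, rfl⟩

theorem IsRootSystem.ne_zero_of_mem (hR : IsRootSystem R) {α : E} (hα : α ∈ R) : α ≠ 0 :=
  fun h => hR.ne_zero (h ▸ hα)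

theorem IsRootSystem.neg_mem (hR : IsRootSystem R) {α : E} (hα : α ∈ R) : -α ∈ R := by
  simpa using hR.refl_mem α hα α hα

theorem IsRootSystem.apply_mem_of_mem_weylGroup (hR : IsRootSystem R) {w : E ≃ₗᵢ[ℝ] E}
    (hw : w ∈ weylGroup R) {α : E} (hα : α ∈ R) : w α ∈ R := by
  induction hw using Subgroup.closure_induction'' generalizing α with
  | mem _ h | inv_mem _ h =>
    obtain ⟨β, hβ, rfl⟩ := h
    simpa using hR.refl_mem β hβ α hα
  | one => exact hα
  | mul u v _ _ hu hv => exact hu (hv hα)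

/-- The two Cartan integers of `α` and `β` are positive with product `< 4`, so one of them is `1`,
and the corresponding reflection is `β ↦ β - α` or `α ↦ α - β`. -/
theorem IsRootSystem.sub_mem_of_inner_pos (hR : IsRootSystem R) {α β : E} (hα : α ∈ R) (hβ : β ∈ R)
    (hpos : 0 < ⟪α, β⟫) (hne : α ≠ β) : β - α ∈ R := by
  have hα0 := norm_pos_iff.2 (hR.ne_zero_of_mem hα)
  have hβ0 := norm_pos_iff.2 (hR.ne_zero_of_mem hβ)
  have hlt : ⟪α, β⟫ < ‖α‖ * ‖β‖ := by
    refine inner_lt_norm_mul_iff_real.2 fun h => ?_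
    have hβα : β = (‖β‖ / ‖α‖) • α := by
      rw [div_eq_inv_mul, mul_smul, h, smul_smul, inv_mul_cancel₀ hα0.ne', one_smul]
    rcases hR.reduced α hα _ (hβα ▸ hβ) with h1 | h1
    · exact hne (by rw [hβα, h1, one_smul])
    · linarith [div_pos hβ0 hα0]
  obtain ⟨m, hm⟩ := hR.pairing_int α hα β hβ
  obtain ⟨n, hn⟩ := hR.pairing_int β hβ α hα
  rw [real_inner_self_eq_norm_sq] at hm hn
  rw [real_inner_comm] at hn
  have hm0 : 0 < (m : ℝ) := hm ▸ by positivity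
  have hn0 : 0 < (n : ℝ) := hn ▸ by positivity
  have hmn : (m : ℝ) * n < 4 := by
    rw [← hm, ← hn, div_mul_div_comm, div_lt_iff₀ (by positivity)]
    nlinarith
  have hmn' : m = 1 ∨ n = 1 := by
    have : 0 < m := by exact_mod_cast hm0
    have : 0 < n := by exact_mod_cast hn0
    have : m * n < 4 := by exact_mod_cast hmn
    by_contra! h
    have : 2 ≤ m := by omega
    have : 2 ≤ n := by omega
    nlinarith
  rcases hmn' with rfl | rfl
  · simpa [wrefl_apply, real_inner_comm, real_inner_self_eq_norm_sq, hm] using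
      hR.refl_mem α hα β hβ
  · simpa [wrefl_apply, real_inner_self_eq_norm_sq, hn] using
      hR.neg_mem (hR.refl_mem β hβ α hα)

theorem exists_forall_inner_ne_zero {S : Finset E} (hS : (0 : E) ∉ S) :
    ∃ t : E, ∀ α ∈ S, ⟪t, α⟫ ≠ 0 := by
  have htop : ⊤ ∉ S.image fun α => (ℝ ∙ α)ᗮ := by
    simp only [Finset.mem_image, not_exists, not_and]
    intro α hα h
    have : α ∈ (ℝ ∙ α)ᗮ := h ▸ Submodule.mem_top
    rw [Submodule.mem_orthogonal_singleton_iff_inner_right, inner_self_eq_zero] at this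
    exact hS (this ▸ hα)
  obtain ⟨t, ht⟩ :=
    (Set.ne_univ_iff_exists_notMem _).1 (Subspace.biUnion_ne_univ_of_top_notMem htop)
  refine ⟨t, fun α hα h => ht ?_⟩
  simp only [Set.mem_iUnion, Finset.mem_image]
  refine ⟨_, ⟨α, hα, rfl⟩, ?_⟩
  rw [SetLike.mem_coe, Submodule.mem_orthogonal_singleton_iff_inner_right, real_inner_comm, h]

noncomputable def posRoots (R : Finset E) (t : E) : Finset E :=
  R.filter fun α => 0 < ⟪t, α⟫

@[simp]
theorem mem_posRoots {α : E} : α ∈ posRoots R t ↔ α ∈ R ∧ 0 < ⟪t, α⟫ :=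
  Finset.mem_filter

theorem neg_notMem_posRoots {α : E} (hα : α ∈ posRoots R t) : -α ∉ posRoots R t := by
  simp only [mem_posRoots, inner_neg_right, not_and, not_lt] at hα ⊢
  exact fun _ => by linarith [hα.2]

theorem neg_mem_posRoots (hR : IsRootSystem R) (ht : ∀ α ∈ R, ⟪t, α⟫ ≠ 0) {α : E} (hα : α ∈ R)
    (h : α ∉ posRoots R t) : -α ∈ posRoots R t := by
  simp only [mem_posRoots, hα, true_and, not_lt, inner_neg_right, neg_pos] at h ⊢
  exact ⟨hR.neg_mem hα, h.lt_of_ne (ht α hα)⟩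

theorem posRoots_induction {p : E → Prop}
    (h : ∀ β ∈ posRoots R t, (∀ γ ∈ posRoots R t, ⟪t, γ⟫ < ⟪t, β⟫ → p γ) → p β) :
    ∀ β ∈ posRoots R t, p β := by
  have hwf : (posRoots R t : Set E).WellFoundedOn (Function.onFun (· < ·) fun β => ⟪t, β⟫) :=
    Set.wellFoundedOn_image.1 ((posRoots R t).finite_toSet.image _).wellFoundedOn
  exact fun β hβ => hwf.induction hβ h

def simpleRoots (R : Finset E) (t : E) : Set E := {δ | IsSimpleRoot (posRoots R t) δ}

theorem mem_closure_simpleRoots {β : E} (hβ : β ∈ posRoots R t) :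
    β ∈ AddSubmonoid.closure (simpleRoots R t) := by
  refine posRoots_induction (p := (· ∈ AddSubmonoid.closure (simpleRoots R t)))
    (fun β hβ ih => ?_) β hβ
  by_cases hs : β ∈ simpleRoots R t
  · exact AddSubmonoid.subset_closure hs
  obtain ⟨γ, hγ, δ, hδ, rfl⟩ := not_not.1 (not_and.1 hs hβ)
  have hγ' := (mem_posRoots.1 hγ).2
  have hδ' := (mem_posRoots.1 hδ).2
  exact add_mem (ih γ hγ (by rw [inner_add_right]; linarith))
    (ih δ hδ (by rw [inner_add_right]; linarith))

theorem inner_nonpos_of_mem_closure {S : Set E} {v x : E} (hS : ∀ s ∈ S, ⟪s, v⟫ ≤ 0)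
    (hx : x ∈ AddSubmonoid.closure S) : ⟪x, v⟫ ≤ 0 := by
  induction hx using AddSubmonoid.closure_induction with
  | mem s hs => exact hS s hs
  | zero => simp
  | add x y _ _ hx hy => rw [inner_add_left]; linarith

theorem eq_zero_or_inner_pos_of_mem_closure {S : Set E} {x : E} (hS : ∀ s ∈ S, 0 < ⟪t, s⟫)
    (hx : x ∈ AddSubmonoid.closure S) : x = 0 ∨ 0 < ⟪t, x⟫ := by
  induction hx using AddSubmonoid.closure_induction with
  | mem s hs => exact .inr (hS s hs)
  | zero => exact .inl rfl
  | add x y _ _ hx hy =>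
    rw [inner_add_right]
    rcases hx with rfl | hx <;> rcases hy with rfl | hy
    exacts [.inl (add_zero 0), .inr (by simpa using hy), .inr (by simpa using hx),
      .inr (add_pos hx hy)]

theorem inner_nonpos_of_mem_simpleRoots (hR : IsRootSystem R) (ht : ∀ α ∈ R, ⟪t, α⟫ ≠ 0)
    {δ ε : E} (hδ : δ ∈ simpleRoots R t) (hε : ε ∈ simpleRoots R t) (hne : δ ≠ ε) :
    ⟪δ, ε⟫ ≤ 0 := by
  by_contra! h
  have hsub := hR.sub_mem_of_inner_pos (mem_posRoots.1 hδ.1).1 (mem_posRoots.1 hε.1).1 h hne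
  by_cases hpos : ε - δ ∈ posRoots R t
  · exact hε.2 ⟨δ, hδ.1, ε - δ, hpos, by abel⟩
  · have := neg_mem_posRoots hR ht hsub hpos
    rw [neg_sub] at this
    exact hδ.2 ⟨ε, hε.1, δ - ε, this, by abel⟩

/-- Write `β = m δ + u` and `-s_δ β = n δ + u'` with `u, u'` in the cone spanned by the other
simple roots. Then `u + u'` is a multiple of `δ`, which forces `u = u' = 0`, so `β` is a multiple
of `δ`. -/
theorem wrefl_mem_posRoots (hR : IsRootSystem R) (ht : ∀ α ∈ R, ⟪t, α⟫ ≠ 0) {δ β : E}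
    (hδ : δ ∈ simpleRoots R t) (hβ : β ∈ posRoots R t) (hne : β ≠ δ) :
    wrefl δ β ∈ posRoots R t := by
  have hδR := (mem_posRoots.1 hδ.1).1
  have htδ := (mem_posRoots.1 hδ.1).2
  have hδδ : 0 < ⟪δ, δ⟫ := real_inner_self_pos.2 (hR.ne_zero_of_mem hδR)
  by_contra h
  have hγ := neg_mem_posRoots hR ht (hR.refl_mem δ hδR β (mem_posRoots.1 hβ).1) h
  obtain ⟨m, u, hu, hβu⟩ :=
    AddSubmonoid.exists_nsmul_add_of_mem_closure δ (mem_closure_simpleRoots hβ)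
  obtain ⟨n, u', hu', hγu⟩ :=
    AddSubmonoid.exists_nsmul_add_of_mem_closure δ (mem_closure_simpleRoots hγ)
  have hcone : ∀ s ∈ simpleRoots R t \ {δ}, ⟪s, δ⟫ ≤ 0 ∧ 0 < ⟪t, s⟫ := fun s hs =>
    ⟨inner_nonpos_of_mem_simpleRoots hR ht hs.1 hδ hs.2, (mem_posRoots.1 hs.1.1).2⟩
  rw [← Nat.cast_smul_eq_nsmul ℝ] at hβu hγu
  rw [wrefl_apply] at hγu
  have hsum : u + u' = (2 * ⟪β, δ⟫ / ⟪δ, δ⟫ - m - n) • δ := by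
    linear_combination (norm := module) -hβu - hγu
  have hsum0 : u + u' = 0 := by
    refine (eq_zero_or_inner_pos_of_mem_closure (fun s hs => (hcone s hs).2)
      (add_mem hu hu')).resolve_right fun hpos => ?_
    have hnonpos := inner_nonpos_of_mem_closure (fun s hs => (hcone s hs).1) (add_mem hu hu')
    rw [hsum, real_inner_smul_right] at hpos
    rw [hsum, real_inner_smul_left] at hnonpos
    nlinarith [pos_of_mul_pos_left hpos htδ.le]
  have hu0 : u = 0 := by
    refine (eq_zero_or_inner_pos_of_mem_closure (fun s hs => (hcone s hs).2) hu).resolve_right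
      fun hpos => ?_
    have h' : ⟪t, u'⟫ = -⟪t, u⟫ := by rw [eq_neg_of_add_eq_zero_right hsum0, inner_neg_right]
    rcases eq_zero_or_inner_pos_of_mem_closure (fun s hs => (hcone s hs).2) hu' with rfl | h''
    · rw [inner_zero_right] at h'; linarith
    · linarith
  rw [hu0, add_zero] at hβu
  rcases hR.reduced δ hδR m (hβu ▸ (mem_posRoots.1 hβ).1) with h1 | h1
  · exact hne (by rw [hβu, h1, one_smul])
  · linarith [(Nat.cast_nonneg m : (0 : ℝ) ≤ m)]

/-- A list of simple roots, read as the word `∏ s_δ` in the simple reflections. -/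
def IsSimpleWord (R : Finset E) (t : E) (L : List E) : Prop := ∀ δ ∈ L, δ ∈ simpleRoots R t

theorem exists_simpleWord_wrefl (hR : IsRootSystem R) (ht : ∀ α ∈ R, ⟪t, α⟫ ≠ 0) {β : E}
    (hβ : β ∈ R) : ∃ L, IsSimpleWord R t L ∧ (L.map wrefl).prod = wrefl β := by
  wlog hβ' : β ∈ posRoots R t generalizing β
  · simpa using this (hR.neg_mem hβ) (neg_mem_posRoots hR ht hβ hβ')
  clear hβ
  refine posRoots_induction (p := fun β => ∃ L, IsSimpleWord R t L ∧ (L.map wrefl).prod = wrefl β)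
    (fun β hβ ih => ?_) β hβ'
  by_cases hs : β ∈ simpleRoots R t
  · exact ⟨[β], by simpa [IsSimpleWord] using hs, by simp⟩
  have hββ : 0 < ⟪β, β⟫ := real_inner_self_pos.2 (hR.ne_zero_of_mem (mem_posRoots.1 hβ).1)
  obtain ⟨δ, hδ, hβδ⟩ : ∃ δ ∈ simpleRoots R t, 0 < ⟪δ, β⟫ := by
    by_contra! h
    linarith [inner_nonpos_of_mem_closure h (mem_closure_simpleRoots hβ)]
  have hγ := wrefl_mem_posRoots hR ht hδ hβ fun h => hs (h ▸ hδ)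
  have hδδ : 0 < ⟪δ, δ⟫ := real_inner_self_pos.2 (hR.ne_zero_of_mem (mem_posRoots.1 hδ.1).1)
  have htγ : ⟪t, wrefl δ β⟫ < ⟪t, β⟫ := by
    have := (mem_posRoots.1 hδ.1).2
    rw [wrefl_apply, inner_sub_right, real_inner_smul_right, real_inner_comm δ β]
    nlinarith [div_pos (mul_pos two_pos hβδ) hδδ]
  obtain ⟨L, hL, hLβ⟩ := ih _ hγ htγ
  refine ⟨δ :: L ++ [δ], ?_, ?_⟩
  · simpa [IsSimpleWord, or_imp, forall_and, hδ] using hL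
  · rw [← mul_wrefl_mul_inv] at hLβ
    simp [hLβ, mul_assoc]

theorem exists_simpleWord (hR : IsRootSystem R) (ht : ∀ α ∈ R, ⟪t, α⟫ ≠ 0) {w : E ≃ₗᵢ[ℝ] E}
    (hw : w ∈ weylGroup R) : ∃ L, IsSimpleWord R t L ∧ (L.map wrefl).prod = w := by
  induction hw using Subgroup.closure_induction with
  | mem _ h =>
    obtain ⟨β, hβ, rfl⟩ := h
    exact exists_simpleWord_wrefl hR ht hβ
  | one => exact ⟨[], by simp [IsSimpleWord], rfl⟩
  | mul u v _ _ hu hv =>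
    obtain ⟨L, hL, rfl⟩ := hu
    obtain ⟨M, hM, rfl⟩ := hv
    exact ⟨L ++ M, by simpa [IsSimpleWord, or_imp, forall_and] using ⟨hL, hM⟩, by simp⟩
  | inv u _ hu =>
    obtain ⟨L, hL, rfl⟩ := hu
    refine ⟨L.reverse, by simpa [IsSimpleWord] using hL, ?_⟩
    simp [List.prod_inv_reverse, Function.comp_def, List.map_reverse]

theorem exists_simpleWord_eq_mul_wrefl (hR : IsRootSystem R) (ht : ∀ α ∈ R, ⟪t, α⟫ ≠ 0)
    {L : List E} (hL : IsSimpleWord R t L) {δ : E} (hδ : δ ∈ simpleRoots R t)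
    (hneg : (L.map wrefl).prod δ ∉ posRoots R t) :
    ∃ M, IsSimpleWord R t M ∧ M.length + 1 = L.length ∧
      (M.map wrefl).prod = (L.map wrefl).prod * wrefl δ := by
  induction L with
  | nil => exact absurd hδ.1 hneg
  | cons γ L ih =>
    have hγ : γ ∈ simpleRoots R t := hL γ List.mem_cons_self
    have hL' : IsSimpleWord R t L := fun x hx => hL x (List.mem_cons_of_mem γ hx)
    by_cases h : (L.map wrefl).prod δ ∈ posRoots R t
    · have hγδ : (L.map wrefl).prod δ = γ := by
        by_contra hne
        exact hneg (by simpa using wrefl_mem_posRoots hR ht hγ h hne)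
      refine ⟨L, hL', by simp, ?_⟩
      rw [List.map_cons, List.prod_cons, ← hγδ, ← mul_wrefl_mul_inv]
      simp [mul_assoc]
    · obtain ⟨M, hM, hlen, hprod⟩ := ih hL' h
      refine ⟨γ :: M, ?_, by simp [hlen], by simp [hprod, mul_assoc]⟩
      simpa [IsSimpleWord, hγ] using hM

theorem prod_simpleWord_eq_one (hR : IsRootSystem R) (ht : ∀ α ∈ R, ⟪t, α⟫ ≠ 0)
    {L : List E} (hL : IsSimpleWord R t L)
    (hpos : ∀ δ ∈ simpleRoots R t, (L.map wrefl).prod δ ∈ posRoots R t) :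
    (L.map wrefl).prod = 1 := by
  induction hn : L.length using Nat.strong_induction_on generalizing L with
  | _ n ih =>
  rcases L.eq_nil_or_concat' with rfl | ⟨L', γ, rfl⟩
  · rfl
  have hγ : γ ∈ simpleRoots R t := hL γ (by simp)
  have hneg : (L'.map wrefl).prod γ ∉ posRoots R t := by
    have := neg_notMem_posRoots (hpos γ hγ)
    simpa using this
  obtain ⟨M, hM, hlen, hprod⟩ :=
    exists_simpleWord_eq_mul_wrefl hR ht (fun x hx => hL x (by simp [hx])) hγ hneg
  have hML : (M.map wrefl).prod = ((L' ++ [γ]).map wrefl).prod := by simp [hprod]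
  rw [← hML] at hpos ⊢
  rw [List.length_append, List.length_singleton] at hn
  exact ih M.length (by omega) hM hpos rfl

theorem exists_simpleRoot_apply_notMem_posRoots (hR : IsRootSystem R)
    (ht : ∀ α ∈ R, ⟪t, α⟫ ≠ 0) {w : E ≃ₗᵢ[ℝ] E} (hw : w ∈ weylGroup R) (h1 : w ≠ 1) :
    ∃ δ ∈ simpleRoots R t, w δ ∉ posRoots R t := by
  obtain ⟨L, hL, rfl⟩ := exists_simpleWord hR ht hw
  by_contra! h
  exact h1 (prod_simpleWord_eq_one hR ht hL h)

theorem len_eq_card [DecidableEq E] (Rpos : Finset E) (w : E ≃ₗᵢ[ℝ] E) :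
    len Rpos w = (Rpos.filter fun α => w α ∉ Rpos).card := by
  unfold len
  convert rfl

theorem len_mul_wrefl_add_one (hR : IsRootSystem R) (ht : ∀ α ∈ R, ⟪t, α⟫ ≠ 0)
    {w : E ≃ₗᵢ[ℝ] E} (hw : w ∈ weylGroup R) {δ : E} (hδ : δ ∈ simpleRoots R t)
    (hwδ : w δ ∉ posRoots R t) :
    len (posRoots R t) (w * wrefl δ) + 1 = len (posRoots R t) w := by
  classical
  have hδR := (mem_posRoots.1 hδ.1).1
  have hinv : ((posRoots R t).filter fun β => (w * wrefl δ) β ∉ posRoots R t) =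
      (((posRoots R t).filter fun β => w β ∉ posRoots R t).erase δ).image (wrefl δ) := by
    ext β
    rw [Finset.mem_filter, Finset.mem_image]
    simp only [Finset.mem_erase, Finset.mem_filter, LinearIsometryEquiv.coe_mul,
      Function.comp_apply]
    constructor
    · rintro ⟨hβ, hwβ⟩
      have hβδ : β ≠ δ := by
        rintro rfl
        exact hwβ (by simpa using neg_mem_posRoots hR ht (hR.apply_mem_of_mem_weylGroup hw hδR) hwδ)
      refine ⟨wrefl δ β, ⟨fun h => ?_, wrefl_mem_posRoots hR ht hδ hβ hβδ, hwβ⟩, wrefl_wrefl δ β⟩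
      have : β = -δ := by rw [← wrefl_wrefl δ β, h, wrefl_apply_self]
      exact neg_notMem_posRoots hδ.1 (this ▸ hβ)
    · rintro ⟨γ, ⟨hγδ, hγ, hwγ⟩, rfl⟩
      exact ⟨wrefl_mem_posRoots hR ht hδ hγ hγδ, by simpa using hwγ⟩
  rw [len_eq_card, len_eq_card, hinv, Finset.card_image_of_injective _ (wrefl δ).injective,
    Finset.card_erase_add_one (Finset.mem_filter.2 ⟨hδ.1, hwδ⟩)]

/-- `β ↦ -w β` maps the inversions of `w` into those of `w⁻¹`. -/
theorem len_inv (hR : IsRootSystem R) (ht : ∀ α ∈ R, ⟪t, α⟫ ≠ 0) {w : E ≃ₗᵢ[ℝ] E}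
    (hw : w ∈ weylGroup R) : len (posRoots R t) w⁻¹ = len (posRoots R t) w := by
  classical
  have key : ∀ u ∈ weylGroup R, len (posRoots R t) u ≤ len (posRoots R t) u⁻¹ := by
    intro u hu
    rw [len_eq_card, len_eq_card,
      ← Finset.card_image_of_injective _ (neg_injective.comp u.injective)]
    refine Finset.card_le_card fun γ hγ => ?_
    obtain ⟨β, hβ, rfl⟩ := Finset.mem_image.1 hγ
    rw [Finset.mem_filter] at hβ ⊢
    have huβ := hR.apply_mem_of_mem_weylGroup hu (mem_posRoots.1 hβ.1).1
    exact ⟨neg_mem_posRoots hR ht huβ hβ.2, by simpa using neg_notMem_posRoots hβ.1⟩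
  exact le_antisymm (by simpa using key _ (inv_mem hw)) (key w hw)

theorem len_wrefl_mul_mul_wrefl_add_two (hR : IsRootSystem R) (ht : ∀ α ∈ R, ⟪t, α⟫ ≠ 0)
    {w : E ≃ₗᵢ[ℝ] E} (hw : w ∈ weylGroup R) (hw2 : w * w = 1) {δ : E}
    (hδ : δ ∈ simpleRoots R t) (hwδ : w δ ∉ posRoots R t) (hne : w δ ≠ -δ) :
    len (posRoots R t) (wrefl δ * w * wrefl δ) + 2 = len (posRoots R t) w := by
  have hδw : wrefl δ * w ∈ weylGroup R :=
    mul_mem (wrefl_mem_weylGroup (mem_posRoots.1 hδ.1).1) hw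
  have hneg : (wrefl δ * w) δ ∉ posRoots R t := by
    intro h
    have hne' : wrefl δ (w δ) ≠ δ := fun h' =>
      hne (by rw [← wrefl_wrefl δ (w δ), h', wrefl_apply_self])
    exact hwδ (by simpa using wrefl_mem_posRoots hR ht hδ h hne')
  have h1 := len_mul_wrefl_add_one hR ht hw hδ hwδ
  have h2 := len_mul_wrefl_add_one hR ht hδw hδ hneg
  have h3 : len (posRoots R t) (wrefl δ * w) = len (posRoots R t) (w * wrefl δ) := by
    rw [← len_inv hR ht hδw, mul_inv_rev, wrefl_inv, inv_eq_of_mul_eq_one_right hw2]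
  omega

def negRoots (R : Finset E) (w : E ≃ₗᵢ[ℝ] E) : Set E := {α | α ∈ R ∧ w α = -α}

theorem negSpace_one : negSpace (1 : E ≃ₗᵢ[ℝ] E) = ⊥ := by
  ext x
  change x = -x ↔ x = 0
  rw [eq_neg_iff_add_eq_zero, ← two_smul ℝ, smul_eq_zero]
  simp

theorem inner_apply_of_apply_eq_neg {g : E ≃ₗᵢ[ℝ] E} {δ : E} (hδ : g δ = -δ) (x : E) :
    ⟪g x, δ⟫ = -⟪x, δ⟫ := by
  rw [← g.inner_map_map x δ, hδ, inner_neg_right, neg_neg]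

theorem negSpace_mul_wrefl {w : E ≃ₗᵢ[ℝ] E} {δ : E} (hδ : w δ = -δ) :
    negSpace (w * wrefl δ) = (ℝ ∙ δ)ᗮ ⊓ negSpace w := by
  ext x
  rw [Submodule.mem_inf, Submodule.mem_orthogonal_singleton_iff_inner_right, real_inner_comm]
  change w (wrefl δ x) = -x ↔ ⟪x, δ⟫ = 0 ∧ w x = -x
  constructor
  · intro h
    have hx : ⟪x, δ⟫ = 0 := by
      have := congrArg (⟪·, δ⟫) h
      simp only [inner_apply_of_apply_eq_neg hδ, inner_apply_of_apply_eq_neg (wrefl_apply_self δ),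
        neg_neg, inner_neg_left] at this
      linarith
    exact ⟨hx, by rwa [wrefl_apply_of_inner_eq_zero hx] at h⟩
  · rintro ⟨hx, h⟩
    rwa [wrefl_apply_of_inner_eq_zero hx]

theorem negSpace_mul_mul_inv (g w : E ≃ₗᵢ[ℝ] E) :
    negSpace (g * w * g⁻¹) = (negSpace w).map (g.toLinearEquiv : E →ₗ[ℝ] E) := by
  ext x
  rw [Submodule.mem_map_equiv]
  change g (w (g.symm x)) = -x ↔ w (g.symm x) = -g.symm x
  rw [← g.symm.injective.eq_iff, g.symm_apply_apply, map_neg]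

theorem negRoots_mul_mul_inv (hR : IsRootSystem R) {g : E ≃ₗᵢ[ℝ] E} (hg : g ∈ weylGroup R)
    (w : E ≃ₗᵢ[ℝ] E) : negRoots R (g * w * g⁻¹) = g '' negRoots R w := by
  ext β
  constructor
  · rintro ⟨hβ, hwβ⟩
    refine ⟨g⁻¹ β, ⟨hR.apply_mem_of_mem_weylGroup (inv_mem hg) hβ, ?_⟩, by simp⟩
    simpa using congrArg g.symm hwβ
  · rintro ⟨α, ⟨hα, hwα⟩, rfl⟩
    exact ⟨hR.apply_mem_of_mem_weylGroup hg hα, by simp [hwα]⟩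

theorem negSpace_le_span_negRoots_mul_mul_inv (hR : IsRootSystem R) {g w : E ≃ₗᵢ[ℝ] E}
    (hg : g ∈ weylGroup R) (h : negSpace w ≤ Submodule.span ℝ (negRoots R w)) :
    negSpace (g * w * g⁻¹) ≤ Submodule.span ℝ (negRoots R (g * w * g⁻¹)) := by
  rw [negSpace_mul_mul_inv, negRoots_mul_mul_inv hR hg]
  exact (Submodule.map_mono h).trans (Submodule.map_span _ _).le

/-- `X_w = ℝ δ ⊕ (δᗮ ∩ X_w)`, and the second summand is `X_{w s_δ}`. -/
theorem negSpace_le_span_negRoots_of_mul_wrefl {w : E ≃ₗᵢ[ℝ] E} {δ : E} (hδR : δ ∈ R)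
    (hδ : w δ = -δ)
    (h : negSpace (w * wrefl δ) ≤ Submodule.span ℝ (negRoots R (w * wrefl δ))) :
    negSpace w ≤ Submodule.span ℝ (negRoots R w) := by
  have hδw : ℝ ∙ δ ≤ negSpace w := (Submodule.span_singleton_le_iff_mem _ _).2 hδ
  rw [← Submodule.sup_orthogonal_inf_of_hasOrthogonalProjection hδw, ← negSpace_mul_wrefl hδ]
  refine sup_le (Submodule.span_mono (Set.singleton_subset_iff.2 ⟨hδR, hδ⟩))
    (h.trans (Submodule.span_mono fun α hα => ⟨hα.1, ?_⟩))
  have : α ∈ negSpace (w * wrefl δ) := hα.2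
  rw [negSpace_mul_wrefl hδ] at this
  exact this.2

theorem negSpace_le_span_negRoots (hR : IsRootSystem R) (ht : ∀ α ∈ R, ⟪t, α⟫ ≠ 0)
    {w : E ≃ₗᵢ[ℝ] E} (hw : w ∈ weylGroup R) (hw2 : w * w = 1) :
    negSpace w ≤ Submodule.span ℝ (negRoots R w) := by
  induction hn : len (posRoots R t) w using Nat.strong_induction_on generalizing w with
  | _ n ih =>
  by_cases h1 : w = 1
  · simp [h1, negSpace_one]
  obtain ⟨δ, hδ, hwδ⟩ := exists_simpleRoot_apply_notMem_posRoots hR ht hw h1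
  have hδR : δ ∈ R := (mem_posRoots.1 hδ.1).1
  by_cases hneg : w δ = -δ
  · have hcomm : w * wrefl δ * w = wrefl δ := by
      have := mul_wrefl_mul_inv w δ
      rwa [hneg, wrefl_neg, inv_eq_of_mul_eq_one_right hw2] at this
    refine negSpace_le_span_negRoots_of_mul_wrefl hδR hneg (ih _ ?_ ?_ ?_ rfl)
    · linarith [len_mul_wrefl_add_one hR ht hw hδ hwδ]
    · exact mul_mem hw (wrefl_mem_weylGroup hδR)
    · rw [← mul_assoc, hcomm, wrefl_mul_self]
  · have hconj : wrefl δ * (wrefl δ * w * wrefl δ) * (wrefl δ)⁻¹ = w := by simp [mul_assoc]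
    rw [← hconj]
    refine negSpace_le_span_negRoots_mul_mul_inv hR (wrefl_mem_weylGroup hδR) (ih _ ?_ ?_ ?_ rfl)
    · linarith [len_wrefl_mul_mul_wrefl_add_two hR ht hw hw2 hδ hwδ hneg]
    · exact mul_mem (mul_mem (wrefl_mem_weylGroup hδR) hw) (wrefl_mem_weylGroup hδR)
    · simp [mul_assoc, ← mul_assoc w w, hw2]

end

/-- For an involution `w` in the Weyl group, the roots `R_w = {α ∈ R : w α = -α}` span
the `(-1)`-eigenspace `X_w` of `w`. -/
theorem span_negRoots_eq_negSpace
    {R : Finset V} (hR : IsRootSystem R)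
    (w : V ≃ₗᵢ[ℝ] V) (hw : w ∈ weylGroup R) (hw2 : w * w = 1) :
    Submodule.span ℝ {α : V | α ∈ R ∧ w α = -α} = negSpace w := by
  obtain ⟨t, ht⟩ := exists_forall_inner_ne_zero hR.ne_zero
  exact le_antisymm (Submodule.span_le.2 fun α hα => hα.2) (negSpace_le_span_negRoots hR ht hw hw2)
end
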